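/- Let A ∈ K^{M×N} have s-RIP constant δ_s(A) and B ∈ K^{m×n} have σ-RIP constant δ_σ(B). Then the Kronecker product A ⊗ B, acting on (x_1,…,x_N) ∈ (K^n)^N by (A ⊗ B)(x_1,…,x_N) = Σ_{i=1}^N a_i ⊗ (B x_i) with a_i the columns of A, has (s,(σ,…,σ))-HiRIP constant satisfying δ_{(s,(σ,…,σ))}(A ⊗ B) ≤ δ_s(A) + δ_σ(B) + δ_s(A)·δ_σ(B). -/
import Mathlib


/-!
Hierarchical measurement operators and the HiRIP (Theorem 1 of the paper).
`𝕜` plays the role of the field `K ∈ {ℝ, ℂ}`.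
-/

open Finset
open scoped BigOperators

variable {𝕜 : Type*} [RCLike 𝕜]

/-- Squared ℓ²-norm of a vector. -/
def normSq {ι : Type*} [Fintype ι] (v : ι → 𝕜) : ℝ := ∑ j, ‖v j‖ ^ 2

/-- A vector is `k`-sparse if it has at most `k` nonzero entries. -/
def IsSparse {n : ℕ} (k : ℕ) (v : Fin n → 𝕜) : Prop := {j | v j ≠ 0}.ncard ≤ k

/-- `x = (x_1, …, x_N)` is `(s, σ)`-hierarchically sparse: at most `s` blocks are
nonzero and each (nonzero) block `x i` has at most `σ i` nonzero entries. -/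
def IsHiSparse {N : ℕ} {n : Fin N → ℕ} (s : ℕ) (σ : Fin N → ℕ)
    (x : ∀ i, Fin (n i) → 𝕜) : Prop :=
  {i | x i ≠ 0}.ncard ≤ s ∧ ∀ i, IsSparse (σ i) (x i)

/-- The `k`-RIP constant `δ_k(M)` of a matrix `M`: the smallest `δ ≥ 0` such that
`(1-δ)‖v‖² ≤ ‖Mv‖² ≤ (1+δ)‖v‖²` for all `k`-sparse `v`. -/
noncomputable def ripConst {m n : ℕ} (M : Matrix (Fin m) (Fin n) 𝕜) (k : ℕ) : ℝ :=
  sInf {δ : ℝ | 0 ≤ δ ∧ ∀ v : Fin n → 𝕜, IsSparse k v →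
    (1 - δ) * normSq v ≤ normSq (M.mulVec v) ∧ normSq (M.mulVec v) ≤ (1 + δ) * normSq v}

/-- The `(s, σ)`-HiRIP constant of a (not necessarily linear) map `T` on block vectors:
the smallest `δ ≥ 0` such that `(1-δ)‖x‖² ≤ ‖Tx‖² ≤ (1+δ)‖x‖²` for all
`(s, σ)`-hierarchically sparse `x`. -/
noncomputable def hiripConst {N : ℕ} {n : Fin N → ℕ} {ι : Type*} [Fintype ι]
    (T : (∀ i, Fin (n i) → 𝕜) → ι → 𝕜) (s : ℕ) (σ : Fin N → ℕ) : ℝ :=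
  sInf {δ : ℝ | 0 ≤ δ ∧ ∀ x : ∀ i, Fin (n i) → 𝕜, IsHiSparse s σ x →
    (1 - δ) * (∑ i, normSq (x i)) ≤ normSq (T x) ∧
      normSq (T x) ≤ (1 + δ) * (∑ i, normSq (x i))}

/-- The hierarchical measurement operator `H(x_1,…,x_N) = ∑ i, a_i ⊗ (B_i x_i)`,
built from a mixing matrix `A` (with columns `a_i`) and block matrices `B_i`.
The output is indexed by `Fin M × Fin m`, i.e. `(a ⊗ v) (j, l) = a j * v l`. -/
def hierOp {M N m : ℕ} {n : Fin N → ℕ} (A : Matrix (Fin M) (Fin N) 𝕜)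
    (B : ∀ i, Matrix (Fin m) (Fin (n i)) 𝕜) (x : ∀ i, Fin (n i) → 𝕜) :
    Fin M × Fin m → 𝕜 :=
  fun p => ∑ i, A p.1 i * (B i).mulVec (x i) p.2

/-- The Kronecker product `A ⊗ B` acting blockwise:
`(A ⊗ B)(x_1,…,x_N) = ∑ i, a_i ⊗ (B x_i)` with `a_i` the columns of `A`.
It is the hierarchical measurement operator with all block matrices equal to `B`. -/
def kron {M N m n : ℕ} (A : Matrix (Fin M) (Fin N) 𝕜) (B : Matrix (Fin m) (Fin n) 𝕜)
    (x : Fin N → Fin n → 𝕜) : Fin M × Fin m → 𝕜 :=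
  fun p => ∑ i, A p.1 i * B.mulVec (x i) p.2

section Aux

variable {𝕜 : Type*} [RCLike 𝕜]

lemma normSq_nonneg {ι : Type*} [Fintype ι] (v : ι → 𝕜) : 0 ≤ normSq v :=
  Finset.sum_nonneg fun _ _ => by positivity

lemma normSq_mulVec_le {m n : ℕ} (Mt : Matrix (Fin m) (Fin n) 𝕜) (v : Fin n → 𝕜) :
    normSq (Mt.mulVec v) ≤ (∑ j, ∑ l, ‖Mt j l‖ ^ 2) * normSq v := by
  rw [normSq, Finset.sum_mul]
  refine Finset.sum_le_sum fun j _ => ?_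
  have h1 : ‖Mt.mulVec v j‖ ≤ ∑ l, ‖Mt j l‖ * ‖v l‖ := by
    have : Mt.mulVec v j = ∑ l, Mt j l * v l := rfl
    rw [this]
    refine (norm_sum_le _ _).trans_eq ?_
    simp [norm_mul]
  calc ‖Mt.mulVec v j‖ ^ 2 ≤ (∑ l, ‖Mt j l‖ * ‖v l‖) ^ 2 := by
        have h0 : (0:ℝ) ≤ ‖Mt.mulVec v j‖ := norm_nonneg _
        nlinarith
    _ ≤ (∑ l, ‖Mt j l‖ ^ 2) * ∑ l, ‖v l‖ ^ 2 :=
        Finset.sum_mul_sq_le_sq_mul_sq _ _ _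
    _ = (∑ l, ‖Mt j l‖ ^ 2) * normSq v := rfl

lemma ripConst_nonneg {m n : ℕ} (Mt : Matrix (Fin m) (Fin n) 𝕜) (k : ℕ) :
    0 ≤ ripConst Mt k :=
  Real.sInf_nonneg fun _ hδ => hδ.1

lemma ripConst_spec {m n : ℕ} (Mt : Matrix (Fin m) (Fin n) 𝕜) (k : ℕ)
    (v : Fin n → 𝕜) (hv : IsSparse k v) :
    (1 - ripConst Mt k) * normSq v ≤ normSq (Mt.mulVec v) ∧
      normSq (Mt.mulVec v) ≤ (1 + ripConst Mt k) * normSq v := by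
  have hmem : ripConst Mt k ∈ {δ : ℝ | 0 ≤ δ ∧ ∀ v : Fin n → 𝕜, IsSparse k v →
      (1 - δ) * normSq v ≤ normSq (Mt.mulVec v) ∧
        normSq (Mt.mulVec v) ≤ (1 + δ) * normSq v} := by
    rw [ripConst]
    refine IsClosed.csInf_mem ?_ ?_ ⟨0, fun δ hδ => hδ.1⟩
    · have heq : {δ : ℝ | 0 ≤ δ ∧ ∀ v : Fin n → 𝕜, IsSparse k v →
          (1 - δ) * normSq v ≤ normSq (Mt.mulVec v) ∧
            normSq (Mt.mulVec v) ≤ (1 + δ) * normSq v}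
          = {δ : ℝ | 0 ≤ δ} ∩ ⋂ w : Fin n → 𝕜,
          {δ : ℝ | IsSparse k w →
            ((1 - δ) * normSq w ≤ normSq (Mt.mulVec w) ∧
              normSq (Mt.mulVec w) ≤ (1 + δ) * normSq w)} := by
        ext δ
        simp only [Set.mem_setOf_eq, Set.mem_inter_iff, Set.mem_iInter]
      rw [heq]
      refine (isClosed_le continuous_const continuous_id).inter (isClosed_iInter fun w => ?_)
      by_cases hw : IsSparse k w
      · simp only [hw, forall_true_left]
        exact (isClosed_le ((continuous_const.sub continuous_id).mul continuous_const)
            continuous_const).inter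
          (isClosed_le continuous_const
            ((continuous_const.add continuous_id).mul continuous_const))
      · simp only [hw, false_implies, Set.setOf_true]
        exact isClosed_univ
    · have hC : (0:ℝ) ≤ ∑ j, ∑ l, ‖Mt j l‖ ^ 2 := by positivity
      refine ⟨1 + ∑ j, ∑ l, ‖Mt j l‖ ^ 2, by linarith, fun w _ => ⟨?_, ?_⟩⟩
      · have h1 : (1 - (1 + ∑ j, ∑ l, ‖Mt j l‖ ^ 2)) ≤ 0 := by linarith
        calc (1 - (1 + ∑ j, ∑ l, ‖Mt j l‖ ^ 2)) * normSq w ≤ 0 :=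
              mul_nonpos_of_nonpos_of_nonneg h1 (normSq_nonneg w)
          _ ≤ normSq (Mt.mulVec w) := normSq_nonneg _
      · refine (normSq_mulVec_le Mt w).trans ?_
        apply mul_le_mul_of_nonneg_right _ (normSq_nonneg w)
        linarith
  exact hmem.2 v hv

end Aux

/-- **Kronecker HiRIP.** If `A` has `s`-RIP constant `δ_s(A)` and `B` has `σ`-RIP
constant `δ_σ(B)`, then the Kronecker product `A ⊗ B` has `(s,(σ,…,σ))`-HiRIP
constant at most `δ_s(A) + δ_σ(B) + δ_s(A) * δ_σ(B)`. -/
theorem hiripConst_kron_le {M N m n : ℕ}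
    (A : Matrix (Fin M) (Fin N) 𝕜) (B : Matrix (Fin m) (Fin n) 𝕜) (s σ : ℕ) :
    hiripConst (n := fun _ : Fin N => n) (kron A B) s (fun _ => σ) ≤
      ripConst A s + ripConst B σ + ripConst A s * ripConst B σ := by

  set δA := ripConst A s with hδA
  set δB := ripConst B σ with hδB
  have hA0 : 0 ≤ δA := ripConst_nonneg A s
  have hB0 : 0 ≤ δB := ripConst_nonneg B σ
  apply csInf_le ⟨0, fun δ hδ => hδ.1⟩
  refine ⟨add_nonneg (add_nonneg hA0 hB0) (mul_nonneg hA0 hB0), fun x hx => ?_⟩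
  -- the slice vectors
  set w : Fin m → Fin N → 𝕜 := fun q i => B.mulVec (x i) q with hw
  have key : normSq (kron A B x) = ∑ q : Fin m, normSq (A.mulVec (w q)) := by
    simp only [normSq, kron, Matrix.mulVec, dotProduct, hw]
    rw [Fintype.sum_prod_type]
    exact Finset.sum_comm
  have hwsum : ∑ q : Fin m, normSq (w q) = ∑ i, normSq (B.mulVec (x i)) := by
    simp only [normSq, hw]
    exact Finset.sum_comm
  have hws : ∀ q, IsSparse s (w q) := by
    intro q
    refine le_trans (Set.ncard_le_ncard ?_ (Set.toFinite _)) hx.1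
    intro i hi
    simp only [Set.mem_setOf_eq] at hi ⊢
    intro h0
    apply hi
    simp [hw, h0, Matrix.mulVec_zero]
  have hBx : ∀ i, (1 - δB) * normSq (x i) ≤ normSq (B.mulVec (x i)) ∧
      normSq (B.mulVec (x i)) ≤ (1 + δB) * normSq (x i) :=
    fun i => ripConst_spec B σ (x i) (hx.2 i)
  have hAw : ∀ q, (1 - δA) * normSq (w q) ≤ normSq (A.mulVec (w q)) ∧
      normSq (A.mulVec (w q)) ≤ (1 + δA) * normSq (w q) :=
    fun q => ripConst_spec A s (w q) (hws q)
  have hsum0 : 0 ≤ ∑ i, normSq (x i) := Finset.sum_nonneg fun i _ => normSq_nonneg _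
  constructor
  · -- lower bound
    by_cases hδ1 : 1 - (δA + δB + δA * δB) ≤ 0
    · calc (1 - (δA + δB + δA * δB)) * ∑ i, normSq (x i) ≤ 0 :=
            mul_nonpos_of_nonpos_of_nonneg hδ1 hsum0
        _ ≤ normSq (kron A B x) := normSq_nonneg _
    · push_neg at hδ1
      have hA1 : δA ≤ 1 := by nlinarith
      have hB1 : δB ≤ 1 := by nlinarith
      calc (1 - (δA + δB + δA * δB)) * ∑ i, normSq (x i)
          ≤ (1 - δA) * ((1 - δB) * ∑ i, normSq (x i)) :=
            by nlinarith [mul_nonneg (mul_nonneg hA0 hB0) hsum0]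
        _ ≤ (1 - δA) * ∑ i, normSq (B.mulVec (x i)) := by
            apply mul_le_mul_of_nonneg_left _ (by linarith)
            rw [Finset.mul_sum]
            exact Finset.sum_le_sum fun i _ => (hBx i).1
        _ = ∑ q : Fin m, (1 - δA) * normSq (w q) := by
            rw [← Finset.mul_sum, hwsum]
        _ ≤ ∑ q : Fin m, normSq (A.mulVec (w q)) :=
            Finset.sum_le_sum fun q _ => (hAw q).1
        _ = normSq (kron A B x) := key.symm
  · -- upper bound
    calc normSq (kron A B x) = ∑ q : Fin m, normSq (A.mulVec (w q)) := key
      _ ≤ ∑ q : Fin m, (1 + δA) * normSq (w q) :=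
          Finset.sum_le_sum fun q _ => (hAw q).2
      _ = (1 + δA) * ∑ i, normSq (B.mulVec (x i)) := by
          rw [← Finset.mul_sum, hwsum]
      _ ≤ (1 + δA) * ((1 + δB) * ∑ i, normSq (x i)) := by
          apply mul_le_mul_of_nonneg_left _ (by linarith)
          rw [Finset.mul_sum]
          exact Finset.sum_le_sum fun i _ => (hBx i).2
      _ = (1 + (δA + δB + δA * δB)) * ∑ i, normSq (x i) := by ring
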